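/- Setting x_i = 1/2 for all i and y_j = 1/2 for all j in the extended objective f gives f(x,y) = A(Q,c,d), the average objective value over all boolean pairs. Consequently, the round-and-optimize procedure (defining y* by y*_j = 1 iff d_j + Σ_i q_{ij}/2 > 0, then x* by x*_i = 1 iff c_i + Σ_j q_{ij} y*_j > 0) produces a boolean pair (x*,y*) with f(x*,y*) ≥ A(Q,c,d). -/

import Mathlib

open Finset

/-- The bipartite boolean quadratic objective f(x,y) = xᵀQy + c·x + d·y,
extended to real vectors. -/
noncomputable def fobj (m n : ℕ) (Q : Fin m → Fin n → ℝ) (c : Fin m → ℝ) (d : Fin n → ℝ)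
    (x : Fin m → ℝ) (y : Fin n → ℝ) : ℝ :=
  (∑ i, ∑ j, Q i j * x i * y j) + (∑ i, c i * x i) + (∑ j, d j * y j)

/-- A boolean vector viewed as a real 0-1 vector. -/
def bv {k : ℕ} (x : Fin k → Bool) : Fin k → ℝ := fun i => if x i then 1 else 0

/-- The average of f over all 2^(m+n) boolean pairs (x,y). -/
noncomputable def avgA (m n : ℕ) (Q : Fin m → Fin n → ℝ) (c : Fin m → ℝ) (d : Fin n → ℝ) : ℝ :=
  (∑ x : Fin m → Bool, ∑ y : Fin n → Bool, fobj m n Q c d (bv x) (bv y)) / 2 ^ (m + n)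

/-! Since `f` is affine in each coordinate separately, the uniform average over the boolean
cube in one block of variables is the value at `1/2`; and for fixed `x` (resp. `y`) setting
each `y j` (resp. `x i`) to `1` exactly when its coefficient is positive can only beat the
value at `1/2`. Rounding `y` first at `x = 1/2`, then `x` at `y = y*`, gives
`A = f(½,½) ≤ f(½,y*) ≤ f(x*,y*)`. -/

section BooleanCube

variable {k : ℕ}

lemma sum_bv_apply (i : Fin k) : ∑ x : Fin k → Bool, bv x i = 2 ^ k / 2 := by
  have hnot : ∑ x : Fin k → Bool, bv (fun j => !x j) i = ∑ x : Fin k → Bool, bv x i :=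
    Fintype.sum_bijective _ (Function.Involutive.bijective fun x => by simp) _ _ fun _ => rfl
  have hpair : ∀ x : Fin k → Bool, bv x i + bv (fun j => !x j) i = 1 := fun x => by
    cases hxi : x i <;> simp [bv, hxi]
  have htotal := Finset.sum_congr rfl fun x (_ : x ∈ univ) => hpair x
  rw [sum_add_distrib, hnot] at htotal
  simp only [sum_const, card_univ, Fintype.card_fun, Fintype.card_bool, Fintype.card_fin,
    nsmul_eq_mul, mul_one, Nat.cast_pow, Nat.cast_ofNat] at htotal
  linarith

lemma sum_boolCube_sum_bv_mul (a : Fin k → ℝ) :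
    ∑ x : Fin k → Bool, ∑ i, bv x i * a i = 2 ^ k * ∑ i, 1 / 2 * a i := by
  rw [sum_comm, mul_sum]
  refine sum_congr rfl fun i _ => ?_
  rw [← sum_mul, sum_bv_apply]
  ring

lemma sum_half_mul_le_sum_bv_mul (a : Fin k → ℝ) (x : Fin k → Bool)
    (hx : ∀ i, x i = true ↔ 0 < a i) :
    ∑ i, 1 / 2 * a i ≤ ∑ i, bv x i * a i := by
  refine sum_le_sum fun i _ => ?_
  by_cases h : x i = true
  · have := (hx i).mp h
    simp only [bv, h, if_true]
    linarith
  · have := mt (hx i).mpr h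
    simp only [bv, h, Bool.false_eq_true, if_false]
    linarith

end BooleanCube

section Objective

variable {m n : ℕ} (Q : Fin m → Fin n → ℝ) (c : Fin m → ℝ) (d : Fin n → ℝ)

def coeffX (y : Fin n → ℝ) (i : Fin m) : ℝ := c i + ∑ j, Q i j * y j

def coeffY (x : Fin m → ℝ) (j : Fin n) : ℝ := d j + ∑ i, Q i j * x i

lemma fobj_eq_sum_mul_coeffX (x : Fin m → ℝ) (y : Fin n → ℝ) :
    fobj m n Q c d x y = ∑ i, x i * coeffX Q c y i + ∑ j, d j * y j := by
  have hQ : ∀ i j, x i * (Q i j * y j) = Q i j * x i * y j := fun _ _ => by ring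
  simp only [fobj, coeffX, mul_add, mul_sum, sum_add_distrib, hQ, mul_comm (x _) (c _)]
  ring

lemma fobj_eq_sum_mul_coeffY (x : Fin m → ℝ) (y : Fin n → ℝ) :
    fobj m n Q c d x y = ∑ j, y j * coeffY Q d x j + ∑ i, c i * x i := by
  have hQ : ∀ i j, y j * (Q i j * x i) = Q i j * x i * y j := fun _ _ => by ring
  simp only [fobj, coeffY, mul_add, mul_sum, sum_add_distrib, hQ, mul_comm (y _) (d _)]
  rw [sum_comm (s := univ) (t := univ)]
  ring

lemma sum_fobj_bv_left (y : Fin n → ℝ) :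
    ∑ x : Fin m → Bool, fobj m n Q c d (bv x) y = 2 ^ m * fobj m n Q c d (fun _ => 1 / 2) y := by
  simp only [fobj_eq_sum_mul_coeffX, sum_add_distrib, sum_boolCube_sum_bv_mul, sum_const,
    card_univ, Fintype.card_fun, Fintype.card_bool, Fintype.card_fin, nsmul_eq_mul,
    Nat.cast_pow, Nat.cast_ofNat]
  ring

lemma sum_fobj_bv_right (x : Fin m → ℝ) :
    ∑ y : Fin n → Bool, fobj m n Q c d x (bv y) = 2 ^ n * fobj m n Q c d x (fun _ => 1 / 2) := by
  simp only [fobj_eq_sum_mul_coeffY, sum_add_distrib, sum_boolCube_sum_bv_mul, sum_const,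
    card_univ, Fintype.card_fun, Fintype.card_bool, Fintype.card_fin, nsmul_eq_mul,
    Nat.cast_pow, Nat.cast_ofNat]
  ring

lemma fobj_half_eq_avgA : fobj m n Q c d (fun _ => 1 / 2) (fun _ => 1 / 2) = avgA m n Q c d := by
  rw [avgA, eq_div_iff (by positivity)]
  simp only [sum_fobj_bv_right, ← mul_sum, sum_fobj_bv_left]
  ring

lemma fobj_le_fobj_bv_left (y : Fin n → ℝ) (x : Fin m → Bool)
    (hx : ∀ i, x i = true ↔ 0 < coeffX Q c y i) :
    fobj m n Q c d (fun _ => 1 / 2) y ≤ fobj m n Q c d (bv x) y := by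
  simp only [fobj_eq_sum_mul_coeffX Q c d _ y]
  exact add_le_add_left (sum_half_mul_le_sum_bv_mul _ x hx) _

lemma fobj_le_fobj_bv_right (x : Fin m → ℝ) (y : Fin n → Bool)
    (hy : ∀ j, y j = true ↔ 0 < coeffY Q d x j) :
    fobj m n Q c d x (fun _ => 1 / 2) ≤ fobj m n Q c d x (bv y) := by
  simp only [fobj_eq_sum_mul_coeffY Q c d x]
  exact add_le_add_left (sum_half_mul_le_sum_bv_mul _ y hy) _

end Objective

theorem half_vector_rounding (m n : ℕ)
    (Q : Fin m → Fin n → ℝ) (c : Fin m → ℝ) (d : Fin n → ℝ)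
    (ystar : Fin n → Bool)
    (hys : ∀ j, ystar j = true ↔ 0 < d j + ∑ i, Q i j / 2)
    (xstar : Fin m → Bool)
    (hxs : ∀ i, xstar i = true ↔ 0 < c i + ∑ j, Q i j * bv ystar j) :
    fobj m n Q c d (fun _ => 1 / 2) (fun _ => 1 / 2) = avgA m n Q c d
    ∧ avgA m n Q c d ≤ fobj m n Q c d (bv xstar) (bv ystar) := by
  have hys' : ∀ j, ystar j = true ↔ 0 < coeffY Q d (fun _ => 1 / 2) j := by
    simpa only [coeffY, mul_one_div] using hys
  rw [← fobj_half_eq_avgA]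
  exact ⟨rfl, (fobj_le_fobj_bv_right Q c d _ ystar hys').trans
    (fobj_le_fobj_bv_left Q c d _ xstar hxs)⟩
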